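/- arXiv:1303.2729 — 3 statements merged into one kernel-verified Lean document; each statement's English description precedes it below -/
import Mathlib

section
/- If A is a multiplicative subgroup of Z_p^* (p prime) with |A| > p^{3/4}, then the sumset 2A = {a+b : a,b in A} contains all of Z_p^*. -/
open Finset Pointwise

/-- `A` is (the underlying set of) a multiplicative subgroup of `ℤ_p^*`. -/
def mulSubgroup (p : ℕ) (A : Finset (ZMod p)) : Prop :=
  (0 : ZMod p) ∉ A ∧ (1 : ZMod p) ∈ A ∧
    (∀ x ∈ A, ∀ y ∈ A, x * y ∈ A) ∧ ∀ x ∈ A, x⁻¹ ∈ A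

/-! With `S(l) = ∑_{a ∈ A} ψ(a l)` for a primitive additive character `ψ`, a nonzero `x ∉ A + A`
gives `∑_l S(l)² S(-x l) = 0`, since no `a + b - c x` with `a, b, c ∈ A` vanishes (otherwise
`x ∈ c⁻¹(A + A) = A + A`). The term `l = 0` equals `|A|³`. For `l ≠ 0` the sum `S` is constant on
the `|A|` nonzero frequencies `l A`, so Parseval `∑_l |S(l)|² = p |A|` forces
`|S(l)|² ≤ p - |A|`. Hence `|A|³ ≤ √(p - |A|) · |A| (p - |A|)`, i.e. `|A|⁴ ≤ (p - |A|)³ < p³`. -/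

open ComplexConjugate

namespace AddChar

section CommRing

variable {R : Type*} [CommRing R] (ψ : AddChar R ℂ) (A : Finset R)

def expSum (l : R) : ℂ := ∑ a ∈ A, ψ (a * l)

@[simp]
lemma expSum_zero : ψ.expSum A 0 = #A := by
  simp [expSum]

lemma conj_expSum [Finite R] (l : R) : conj (ψ.expSum A l) = ∑ a ∈ A, ψ (-(a * l)) := by
  simp only [expSum, map_sum, map_neg_eq_conj]

variable {ψ} [Fintype R] [DecidableEq R]

lemma sum_sq_norm_expSum (hψ : ψ.IsPrimitive) :
    ∑ l, ‖ψ.expSum A l‖ ^ 2 = Fintype.card R * #A := by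
  have expand (l : R) : (‖ψ.expSum A l‖ ^ 2 : ℂ) = ∑ a ∈ A, ∑ b ∈ A, ψ (l * (a - b)) := by
    rw [← Complex.mul_conj', conj_expSum, expSum, sum_mul_sum]
    refine sum_congr rfl fun a _ ↦ sum_congr rfl fun b _ ↦ ?_
    rw [← map_add_eq_mul]
    ring_nf
  have : (∑ l, ‖ψ.expSum A l‖ ^ 2 : ℂ) = Fintype.card R * #A := by
    simp [expand, sum_comm (s := univ), sum_mulShift _ hψ, sub_eq_zero, mul_comm]
  exact_mod_cast this

lemma sum_erase_zero_sq_norm_expSum (hψ : ψ.IsPrimitive) :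
    ∑ l ∈ univ.erase 0, ‖ψ.expSum A l‖ ^ 2 = #A * (Fintype.card R - #A) := by
  have := add_sum_erase univ (fun l ↦ ‖ψ.expSum A l‖ ^ 2) (mem_univ 0)
  rw [sum_sq_norm_expSum A hψ, expSum_zero, Complex.norm_natCast] at this
  linear_combination this

end CommRing

end AddChar

section MulClosed

variable {F : Type*} [Field F] [DecidableEq F] {A : Finset F}

lemma Finset.image_mul_left_eq_self (h0 : 0 ∉ A) (hmul : ∀ a ∈ A, ∀ b ∈ A, a * b ∈ A)
    {c : F} (hc : c ∈ A) : A.image (c * ·) = A := by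
  have hc0 : c ≠ 0 := fun h ↦ h0 (h ▸ hc)
  refine eq_of_subset_of_card_le (image_subset_iff.2 fun a ha ↦ hmul c hc a ha) ?_
  rw [card_image_of_injective _ (mul_right_injective₀ hc0)]

lemma Finset.mem_add_of_mul_mem_add (h0 : 0 ∉ A) (hmul : ∀ a ∈ A, ∀ b ∈ A, a * b ∈ A)
    {c x : F} (hc : c ∈ A) (hx : c * x ∈ A + A) : x ∈ A + A := by
  obtain ⟨a, ha, b, hb, hab⟩ := mem_add.1 hx
  rw [← image_mul_left_eq_self h0 hmul hc, mem_image] at ha hb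
  obtain ⟨a, ha, rfl⟩ := ha
  obtain ⟨b, hb, rfl⟩ := hb
  rw [← mul_add] at hab
  exact mem_add.2 ⟨a, ha, b, hb, mul_left_cancel₀ (fun h ↦ h0 (h ▸ hc)) hab⟩

namespace AddChar

variable {ψ : AddChar F ℂ}

lemma expSum_mul_of_mem (h0 : 0 ∉ A) (hmul : ∀ a ∈ A, ∀ b ∈ A, a * b ∈ A)
    {c : F} (hc : c ∈ A) (l : F) : ψ.expSum A (c * l) = ψ.expSum A l := by
  conv_rhs => rw [expSum, ← image_mul_left_eq_self h0 hmul hc,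
    sum_image (mul_right_injective₀ fun h ↦ h0 (h ▸ hc)).injOn]
  exact sum_congr rfl fun a _ ↦ by rw [mul_left_comm, mul_assoc]

variable [Fintype F]

lemma sq_norm_expSum_le (hψ : ψ.IsPrimitive) (h0 : 0 ∉ A)
    (hmul : ∀ a ∈ A, ∀ b ∈ A, a * b ∈ A) {l : F} (hl : l ≠ 0) :
    ‖ψ.expSum A l‖ ^ 2 ≤ Fintype.card F - #A := by
  rcases A.eq_empty_or_nonempty with rfl | hA
  · simp [expSum]
  have orbit : ∑ m ∈ A.image (· * l), ‖ψ.expSum A m‖ ^ 2 = #A * ‖ψ.expSum A l‖ ^ 2 := by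
    rw [sum_image (mul_left_injective₀ hl).injOn,
      sum_congr rfl fun a ha ↦ by rw [expSum_mul_of_mem h0 hmul ha], sum_const, nsmul_eq_mul]
  have orbit_le : ∑ m ∈ A.image (· * l), ‖ψ.expSum A m‖ ^ 2
      ≤ ∑ m ∈ univ.erase 0, ‖ψ.expSum A m‖ ^ 2 := by
    refine sum_le_sum_of_subset_of_nonneg ?_ fun _ _ _ ↦ sq_nonneg _
    simp only [subset_iff, mem_image, mem_erase, mem_univ, and_true]
    rintro _ ⟨a, ha, rfl⟩
    exact mul_ne_zero (fun h ↦ h0 (h ▸ ha)) hl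
  rw [orbit, sum_erase_zero_sq_norm_expSum A hψ] at orbit_le
  exact le_of_mul_le_mul_left orbit_le (by exact_mod_cast hA.card_pos)

lemma sum_expSum_sq_mul_expSum_neg_eq_zero (hψ : ψ.IsPrimitive) (h0 : 0 ∉ A)
    (hmul : ∀ a ∈ A, ∀ b ∈ A, a * b ∈ A) {x : F} (hx : x ∉ A + A) :
    ∑ l, ψ.expSum A l ^ 2 * ψ.expSum A (-x * l) = 0 := by
  have expand (l : F) : ψ.expSum A l ^ 2 * ψ.expSum A (-x * l)
      = ∑ a ∈ A, ∑ b ∈ A, ∑ c ∈ A, ψ (l * (a + b - c * x)) := by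
    rw [sq, expSum, sum_mul_sum, sum_mul]
    refine sum_congr rfl fun a _ ↦ ?_
    rw [sum_mul]
    refine sum_congr rfl fun b _ ↦ ?_
    rw [expSum, mul_sum]
    refine sum_congr rfl fun c _ ↦ ?_
    rw [← map_add_eq_mul, ← map_add_eq_mul]
    ring_nf
  simp only [expand]
  rw [sum_comm]
  refine sum_eq_zero fun a ha ↦ ?_
  rw [sum_comm]
  refine sum_eq_zero fun b hb ↦ ?_
  rw [sum_comm]
  refine sum_eq_zero fun c hc ↦ ?_
  have hne : a + b - c * x ≠ 0 := sub_ne_zero.2 fun h ↦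
    hx (mem_add_of_mul_mem_add h0 hmul hc (h ▸ add_mem_add ha hb))
  rw [sum_mulShift _ hψ, if_neg hne, Nat.cast_zero]

theorem card_pow_four_le_of_notMem_add (hψ : ψ.IsPrimitive) (h0 : 0 ∉ A)
    (hmul : ∀ a ∈ A, ∀ b ∈ A, a * b ∈ A) {x : F} (hx0 : x ≠ 0) (hx : x ∉ A + A) :
    (#A : ℝ) ^ 4 ≤ (Fintype.card F - #A) ^ 3 := by
  rcases A.eq_empty_or_nonempty with rfl | hA
  · simp
  have hNpos : 0 < (#A : ℝ) := mod_cast hA.card_pos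
  have hNq : 0 ≤ (Fintype.card F - #A : ℝ) := sub_nonneg.2 (mod_cast card_le_univ A)
  set N : ℝ := (#A : ℝ)
  set q : ℝ := (Fintype.card F : ℝ)
  have main_term : (N : ℂ) ^ 3 = -∑ l ∈ univ.erase 0, ψ.expSum A l ^ 2 * ψ.expSum A (-x * l) := by
    have := sum_expSum_sq_mul_expSum_neg_eq_zero hψ h0 hmul hx
    rw [← add_sum_erase _ _ (mem_univ 0), mul_zero, expSum_zero] at this
    linear_combination this
  have cube_le : N ^ 3 ≤ √(q - N) * (N * (q - N)) :=
    calc N ^ 3 = ‖∑ l ∈ univ.erase 0, ψ.expSum A l ^ 2 * ψ.expSum A (-x * l)‖ := by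
          rw [← norm_neg, ← main_term]; simp [N]
      _ ≤ ∑ l ∈ univ.erase 0, ‖ψ.expSum A l‖ ^ 2 * √(q - N) := by
          refine norm_sum_le_of_le _ fun l hl ↦ ?_
          rw [norm_mul, norm_pow]
          have hxl : -x * l ≠ 0 := mul_ne_zero (neg_ne_zero.2 hx0) (ne_of_mem_erase hl)
          gcongr
          exact Real.le_sqrt_of_sq_le (sq_norm_expSum_le hψ h0 hmul hxl)
      _ = √(q - N) * (N * (q - N)) := by
          rw [← sum_mul, sum_erase_zero_sq_norm_expSum A hψ, mul_comm]
  have sq_le : N ^ 2 ≤ √(q - N) * (q - N) := by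
    refine le_of_mul_le_mul_left ?_ hNpos
    linear_combination cube_le
  calc N ^ 4 = (N ^ 2) ^ 2 := by ring
    _ ≤ (√(q - N) * (q - N)) ^ 2 := by gcongr
    _ = (q - N) ^ 3 := by rw [mul_pow, Real.sq_sqrt hNq]; ring

theorem mem_add_of_card_pow_three_lt (hψ : ψ.IsPrimitive) (h0 : 0 ∉ A)
    (hmul : ∀ a ∈ A, ∀ b ∈ A, a * b ∈ A) (hA : (Fintype.card F : ℝ) ^ 3 < #A ^ 4)
    {x : F} (hx0 : x ≠ 0) : x ∈ A + A := by
  by_contra hx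
  have := card_pow_four_le_of_notMem_add hψ h0 hmul hx0 hx
  have : ((Fintype.card F : ℝ) - #A) ^ 3 ≤ (Fintype.card F : ℝ) ^ 3 := by
    gcongr
    · exact sub_nonneg.2 (mod_cast card_le_univ A)
    · exact sub_le_self _ (Nat.cast_nonneg _)
  linarith

end AddChar

end MulClosed

theorem stmt0 (p : ℕ) (hp : p.Prime) (A : Finset (ZMod p))
    (hA : mulSubgroup p A) (hlarge : (p : ℝ) ^ ((3 : ℝ) / 4) < A.card) :
    ∀ x : ZMod p, x ≠ 0 → x ∈ A + A := by
  have := Fact.mk hp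
  obtain ⟨h0, -, hmul, -⟩ := hA
  refine fun x ↦ AddChar.mem_add_of_card_pow_three_lt (ZMod.isPrimitive_stdAddChar p) h0 hmul ?_
  calc (Fintype.card (ZMod p) : ℝ) ^ 3 = ((p : ℝ) ^ ((3 : ℝ) / 4)) ^ 4 := by
        rw [ZMod.card, ← Real.rpow_natCast _ 4, ← Real.rpow_mul (Nat.cast_nonneg p)]
        norm_num
    _ < (#A : ℝ) ^ 4 := by gcongr
end

section
/- For a finite subset A of an abelian group, Σ_s |A_s|^2 / |A + A_s| ≪ |A|^{-2} E_3(A), where A_s = A ∩ (A+s), E_3(A) = Σ_s |A_s|^3, and the sum is over all s with A_s nonempty. -/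
open Finset Pointwise

/-! By Cauchy–Schwarz, `|A|² |B|² ≤ |A + B| E(A, B)`, so the `s`-th term is at most
`E(A, A_s) / |A|²`. Summing, `∑ₛ E(A, A_s) ≤ E₃(A)`: a solution of `a₁ + b₁ = a₂ + b₂` with
`b₁, b₂ ∈ A_s` is recovered from the triple `(a₁, b₂, b₂ - s) ∈ A_t³`, `t = a₁ - a₂`.
So `C = 1` works. -/

variable {G : Type*} [AddCommGroup G] [DecidableEq G]

lemma mem_inter_image_add_right_iff {A : Finset G} {s x : G} :
    x ∈ A ∩ A.image (· + s) ↔ x ∈ A ∧ x - s ∈ A := by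
  simp [sub_eq_add_neg]

lemma sq_card_div_card_add_le_addEnergy_div (A B : Finset G) :
    (#B : ℝ) ^ 2 / #(A + B) ≤ addEnergy A B / (#A : ℝ) ^ 2 := by
  rcases (A + B).eq_empty_or_nonempty with hAB | hAB
  · rw [hAB, card_empty, Nat.cast_zero, div_zero]
    positivity
  obtain ⟨hA, -⟩ := add_nonempty.mp hAB
  have key : ((#A ^ 2 * #B ^ 2 : ℕ) : ℝ) ≤ (#(A + B) * addEnergy A B : ℕ) := by
    exact_mod_cast le_card_add_mul_addEnergy A B
  push_cast at key
  rw [div_le_div_iff₀ (by simpa using hAB.card_pos) (by have := hA.card_pos; positivity)]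
  linarith

lemma sum_addEnergy_inter_image_add_le (A : Finset G) :
    ∑ s ∈ A - A, addEnergy A (A ∩ A.image (· + s)) ≤
      ∑ s ∈ A - A, #(A ∩ A.image (· + s)) ^ 3 := by
  unfold addEnergy
  simp_rw [pow_three, ← card_product, ← card_sigma]
  refine card_le_card_of_injOn (fun p ↦ ⟨p.2.1.1 - p.2.1.2, (p.2.1.1, p.2.2.2, p.2.2.2 - p.1)⟩)
    ?_ ?_
  · rintro ⟨s, ⟨a₁, a₂⟩, b₁, b₂⟩ hp
    simp only [coe_sigma, Set.mem_sigma_iff, mem_coe, mem_filter, mem_product,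
      mem_inter_image_add_right_iff] at hp ⊢
    obtain ⟨hs, ⟨⟨ha₁, ha₂⟩, ⟨hb₁, hb₁s⟩, hb₂, hb₂s⟩, hsum⟩ := hp
    have hb₁' : b₂ - (a₁ - a₂) = b₁ := by
      rw [sub_sub_eq_add_sub, add_comm, ← hsum, add_sub_cancel_left]
    refine ⟨sub_mem_sub ha₁ ha₂, ⟨ha₁, by rwa [sub_sub_cancel]⟩, ⟨hb₂, by rwa [hb₁']⟩, hb₂s, ?_⟩
    rwa [sub_right_comm, hb₁']
  · rintro ⟨s, ⟨a₁, a₂⟩, b₁, b₂⟩ hp ⟨s', ⟨a₁', a₂'⟩, b₁', b₂'⟩ hp' h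
    simp only [mem_coe, mem_sigma, mem_filter] at hp hp'
    simp only [Sigma.mk.inj_iff, Prod.mk.injEq, heq_eq_eq] at h
    obtain ⟨ht, rfl, rfl, hs⟩ := h
    obtain rfl : s = s' := sub_right_injective hs
    obtain rfl : a₂ = a₂' := sub_right_injective ht
    obtain rfl : b₁ = b₁' := add_left_cancel (hp.2.2.trans hp'.2.2.symm)
    rfl

theorem stmt2 :
    ∃ C : ℝ, 0 < C ∧
      ∀ (G : Type) [AddCommGroup G] [DecidableEq G] (A : Finset G),
        ∑ s ∈ A - A,
            ((A ∩ A.image (· + s)).card : ℝ) ^ 2 / ((A + A ∩ A.image (· + s)).card : ℝ)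
          ≤ C / ((A.card : ℝ) ^ 2) *
              ∑ s ∈ A - A, ((A ∩ A.image (· + s)).card : ℝ) ^ 3 := by
  refine ⟨1, one_pos, fun G _ _ A ↦ ?_⟩
  calc _ ≤ ∑ s ∈ A - A, (addEnergy A (A ∩ A.image (· + s)) : ℝ) / (#A : ℝ) ^ 2 :=
        sum_le_sum fun s _ ↦ sq_card_div_card_add_le_addEnergy_div A _
    _ = (∑ s ∈ A - A, addEnergy A (A ∩ A.image (· + s)) : ℕ) / (#A : ℝ) ^ 2 := by
        rw [← sum_div, Nat.cast_sum]
    _ ≤ (∑ s ∈ A - A, #(A ∩ A.image (· + s)) ^ 3 : ℕ) / (#A : ℝ) ^ 2 := by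
        gcongr ?_ / _
        exact_mod_cast sum_addEnergy_inter_image_add_le A
    _ = _ := by push_cast; ring
end

section
/- Let A ⊆ Z_p with |A| finite and 2A its sumset. If |2A| |A|^3 > p Φ_A^3, where Φ_A = max_{λ≠0} |Σ_{x∈A} e_p(λx)|, then for every a ∈ Z_p^* the equation x_1 + x_2 + y_1 + y_2 = a·y_3 has a solution with x_1, x_2 ∈ 2A and y_1, y_2, y_3 ∈ A. -/
open Finset Pointwise

noncomputable def ep (p : ℕ) (x : ZMod p) : ℂ :=
  Complex.exp (2 * Real.pi * Complex.I * (x.val : ℂ) / (p : ℂ))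

/-!
Count the solutions by orthogonality of characters: with `S r = ∑_{x ∈ 2A} e_p(r x)` and
`T r = ∑_{y ∈ A} e_p(r y)`, `p` times the number of solutions is `∑_r S(r)² T(r)² T(-a r)`.
The term `r = 0` is `|2A|² |A|³`, and the others add up to at most
`Φ³ ∑_r |S r|² = Φ³ p |2A|` by Parseval. So without solutions `|2A| |A|³ ≤ p Φ³`.
-/

theorem norm_sq_mul_apply_zero_le_of_sum_eq_zero {R : Type*} [Fintype R] [DecidableEq R] [Zero R]
    {S g : R → ℂ} {M : ℝ} (hM0 : 0 ≤ M) (hM : ∀ r ≠ 0, ‖g r‖ ≤ M)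
    (h : ∑ r, S r ^ 2 * g r = 0) :
    ‖S 0 ^ 2 * g 0‖ ≤ M * ∑ r, ‖S r‖ ^ 2 := by
  have hsplit : S 0 ^ 2 * g 0 = -∑ r ∈ univ.erase 0, S r ^ 2 * g r := by
    rw [← add_sum_erase _ _ (mem_univ 0)] at h
    linear_combination h
  calc ‖S 0 ^ 2 * g 0‖ ≤ ∑ r ∈ univ.erase 0, ‖S r ^ 2 * g r‖ := by
        rw [hsplit, norm_neg]
        exact norm_sum_le _ _
    _ ≤ ∑ r ∈ univ.erase 0, M * ‖S r‖ ^ 2 := by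
        gcongr with r hr
        rw [norm_mul, norm_pow, mul_comm]
        gcongr
        exact hM r (ne_of_mem_erase hr)
    _ ≤ ∑ r, M * ‖S r‖ ^ 2 :=
        sum_le_sum_of_subset_of_nonneg (erase_subset _ _) fun _ _ _ ↦ by positivity
    _ = M * ∑ r, ‖S r‖ ^ 2 := by rw [mul_sum]

namespace AddChar

theorem map_sum_eq_prod {A M ι : Type*} [AddCommMonoid A] [CommMonoid M] (ψ : AddChar A M)
    (s : Finset ι) (f : ι → A) : ψ (∑ i ∈ s, f i) = ∏ i ∈ s, ψ (f i) :=
  map_prod ψ.toMonoidHom (fun i ↦ Multiplicative.ofAdd (f i)) s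

variable {R : Type*} [CommRing R] [Fintype R] [DecidableEq R] {ψ : AddChar R ℂ}

theorem sum_prod_sum_apply_mul_eq_card_mul {ι : Type*} [Fintype ι] [DecidableEq ι]
    (hψ : ψ.IsPrimitive) (c : ι → R) (t : ι → Finset R) :
    ∑ r, ∏ i, ∑ x ∈ t i, ψ (r * c i * x)
      = Fintype.card R * #{x ∈ Fintype.piFinset t | ∑ i, c i * x i = 0} := by
  have hprod (r : R) (x : ι → R) : ∏ i, ψ (r * c i * x i) = ψ (r * ∑ i, c i * x i) := by
    simp only [Finset.mul_sum, ← mul_assoc, map_sum_eq_prod]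
  simp_rw [prod_univ_sum, hprod]
  rw [sum_comm]
  simp_rw [fun b ↦ sum_mulShift b hψ, Nat.cast_ite, Nat.cast_zero, ← sum_filter, sum_const,
    nsmul_eq_mul, mul_comm]

theorem sum_norm_sum_apply_mul_sq (hψ : ψ.IsPrimitive) (s : Finset R) :
    ∑ r, ‖∑ x ∈ s, ψ (r * x)‖ ^ 2 = Fintype.card R * #s := by
  have hsq (r : R) : (‖∑ x ∈ s, ψ (r * x)‖ ^ 2 : ℂ) = ∑ x ∈ s, ∑ y ∈ s, ψ (r * (x - y)) := by
    rw [← Complex.mul_conj', map_sum, sum_mul_sum]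
    simp_rw [← map_neg_eq_conj, ← map_add_eq_mul, mul_sub, sub_eq_add_neg]
  suffices (∑ r, ‖∑ x ∈ s, ψ (r * x)‖ ^ 2 : ℂ) = Fintype.card R * #s by exact_mod_cast this
  simp_rw [hsq]
  rw [sum_comm]
  have hrow (x : R) (hx : x ∈ s) : ∑ r, ∑ y ∈ s, ψ (r * (x - y)) = Fintype.card R := by
    rw [sum_comm]
    simp_rw [fun b ↦ sum_mulShift b hψ, sub_eq_zero]
    simp [hx]
  rw [sum_congr rfl hrow, sum_const, nsmul_eq_mul, mul_comm]

theorem sum_sq_mul_sq_mul_eq_zero (hψ : ψ.IsPrimitive) {B C : Finset R} {a : R}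
    (hnone : ∀ x₁ ∈ B, ∀ x₂ ∈ B, ∀ y₁ ∈ C, ∀ y₂ ∈ C, ∀ y₃ ∈ C, x₁ + x₂ + y₁ + y₂ ≠ a * y₃) :
    ∑ r, (∑ x ∈ B, ψ (r * x)) ^ 2 * ((∑ y ∈ C, ψ (r * y)) ^ 2 * ∑ y ∈ C, ψ (r * -a * y))
      = 0 := by
  have hempty : {x ∈ Fintype.piFinset ![B, B, C, C, C] |
      ∑ i, ![1, 1, 1, 1, -a] i * x i = 0} = ∅ := by
    refine filter_eq_empty_iff.2 fun x hx hsum ↦ ?_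
    rw [Fintype.mem_piFinset] at hx
    refine hnone (x 0) (hx 0) (x 1) (hx 1) (x 2) (hx 2) (x 3) (hx 3) (x 4) (hx 4) ?_
    simp only [Fin.sum_univ_five, Matrix.cons_val_zero, Matrix.cons_val_one, Matrix.cons_val,
      one_mul, neg_mul] at hsum
    linear_combination hsum
  have hcount := sum_prod_sum_apply_mul_eq_card_mul hψ ![1, 1, 1, 1, -a] ![B, B, C, C, C]
  rw [hempty, card_empty, Nat.cast_zero, mul_zero] at hcount
  rw [← hcount]
  refine sum_congr rfl fun r _ ↦ ?_
  simp only [Fin.prod_univ_five, Matrix.cons_val_zero, Matrix.cons_val_one, Matrix.cons_val,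
    mul_one]
  ring

theorem card_sq_mul_card_pow_three_le (hψ : ψ.IsPrimitive) {B C : Finset R} {a : R}
    (ha : IsUnit a) {M : ℝ} (hM0 : 0 ≤ M) (hM : ∀ r ≠ 0, ‖∑ y ∈ C, ψ (r * y)‖ ≤ M)
    (hnone : ∀ x₁ ∈ B, ∀ x₂ ∈ B, ∀ y₁ ∈ C, ∀ y₂ ∈ C, ∀ y₃ ∈ C, x₁ + x₂ + y₁ + y₂ ≠ a * y₃) :
    (#B : ℝ) ^ 2 * #C ^ 3 ≤ M ^ 3 * (Fintype.card R * #B) := by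
  have hbound := norm_sq_mul_apply_zero_le_of_sum_eq_zero (pow_nonneg hM0 3) (fun r hr ↦ ?_)
    (sum_sq_mul_sq_mul_eq_zero hψ hnone)
  · rw [sum_norm_sum_apply_mul_sq hψ] at hbound
    simpa [pow_succ] using hbound
  · calc ‖(∑ y ∈ C, ψ (r * y)) ^ 2 * ∑ y ∈ C, ψ (r * -a * y)‖
        = ‖∑ y ∈ C, ψ (r * y)‖ ^ 2 * ‖∑ y ∈ C, ψ (r * -a * y)‖ := by rw [norm_mul, norm_pow]
      _ ≤ M ^ 2 * M := by
        gcongr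
        exacts [hM r hr, hM _ (ha.neg.mul_left_eq_zero.not.2 hr)]
      _ = M ^ 3 := by ring

end AddChar

theorem ep_eq_stdAddChar {p : ℕ} [NeZero p] : ep p = ZMod.stdAddChar := by
  ext x
  rw [ep, ZMod.stdAddChar_apply, ZMod.toCircle_apply]

theorem stmt11 (p : ℕ) (hp : p.Prime) (A : Finset (ZMod p)) (Φ : ℝ)
    (hΦ : ∀ lam : ZMod p, lam ≠ 0 → ‖∑ x ∈ A, ep p (lam * x)‖ ≤ Φ)
    (hbig : (p : ℝ) * Φ ^ 3 < ((A + A).card : ℝ) * (A.card : ℝ) ^ 3) :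
    ∀ a : ZMod p, a ≠ 0 →
      ∃ x₁ ∈ A + A, ∃ x₂ ∈ A + A, ∃ y₁ ∈ A, ∃ y₂ ∈ A, ∃ y₃ ∈ A,
        x₁ + x₂ + y₁ + y₂ = a * y₃ := by
  have : Fact p.Prime := ⟨hp⟩
  intro a ha
  by_contra! hnone
  rw [ep_eq_stdAddChar] at hΦ
  have hΦ0 : 0 ≤ Φ := (norm_nonneg _).trans (hΦ 1 one_ne_zero)
  have hbound := AddChar.card_sq_mul_card_pow_three_le (ZMod.isPrimitive_stdAddChar p)
    ha.isUnit hΦ0 hΦ hnone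
  rw [ZMod.card] at hbound
  have hpos : (0 : ℝ) < #(A + A) := by
    by_contra! h0
    rw [le_antisymm h0 (Nat.cast_nonneg _), zero_mul] at hbig
    exact hbig.not_ge (by positivity)
  nlinarith [mul_lt_mul_of_pos_left hbig hpos]
end
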